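/- With f(z) = 4a·e^z·(e^{2z}+1)/(e^{4z}+6e^{2z}+1) and a ≠ 0, the identity f(z) - a = -a·(e^z - 1)⁴/(e^{4z}+6e^{2z}+1) holds for all z where the denominator is nonzero; hence every zero of f - a has multiplicity 4. -/

import Mathlib

theorem mul_div_quartic_sub_eq_neg_mul_sub_one_pow_four {K : Type*} [Field K] (a w : K)
    (hw : w ^ 4 + 6 * w ^ 2 + 1 ≠ 0) :
    4 * a * w * (w ^ 2 + 1) / (w ^ 4 + 6 * w ^ 2 + 1) - a =
      -a * (w - 1) ^ 4 / (w ^ 4 + 6 * w ^ 2 + 1) := by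
  rw [div_sub' hw]
  ring

theorem stmt_7_general (a : ℂ) (f : ℂ → ℂ)
    (hf : ∀ z, f z = 4 * a * Complex.exp z * (Complex.exp (2 * z) + 1) /
      (Complex.exp (4 * z) + 6 * Complex.exp (2 * z) + 1)) :
    ∀ z : ℂ, Complex.exp (4 * z) + 6 * Complex.exp (2 * z) + 1 ≠ 0 →
      f z - a = -a * (Complex.exp z - 1) ^ 4 /
        (Complex.exp (4 * z) + 6 * Complex.exp (2 * z) + 1) := by
  intro z hz
  have exp_two_mul : Complex.exp (2 * z) = Complex.exp z ^ 2 := by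
    rw [← Complex.exp_nat_mul]; norm_num
  have exp_four_mul : Complex.exp (4 * z) = Complex.exp z ^ 4 := by
    rw [← Complex.exp_nat_mul]; norm_num
  rw [hf]
  rw [exp_two_mul, exp_four_mul] at hz ⊢
  exact mul_div_quartic_sub_eq_neg_mul_sub_one_pow_four a _ hz

theorem stmt_7 (a : ℂ) (ha : a ≠ 0) (f : ℂ → ℂ)
    (hf : ∀ z, f z = 4 * a * Complex.exp z * (Complex.exp (2 * z) + 1) /
      (Complex.exp (4 * z) + 6 * Complex.exp (2 * z) + 1)) :
    ∀ z : ℂ, Complex.exp (4 * z) + 6 * Complex.exp (2 * z) + 1 ≠ 0 →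
      f z - a = -a * (Complex.exp z - 1) ^ 4 /
        (Complex.exp (4 * z) + 6 * Complex.exp (2 * z) + 1) :=
  stmt_7_general a f hf
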